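/- arXiv:2110.06718 — 6 statements merged into one kernel-verified Lean document; each statement's English description precedes it below -/
import Mathlib

section
/- Let α₁, α₂, α₃ be pairwise distinct negative real numbers. Then 8α₁α₂α₃ - (α₁+α₂)(α₁+α₃)(α₂+α₃) > 0. -/
theorem stmt5 (α₁ α₂ α₃ : ℝ) (h1 : α₁ < 0) (h2 : α₂ < 0) (h3 : α₃ < 0)
    (h12 : α₁ ≠ α₂) (h13 : α₁ ≠ α₃) (h23 : α₂ ≠ α₃) :
    0 < 8*(α₁*α₂*α₃) - (α₁+α₂)*(α₁+α₃)*(α₂+α₃) := by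
  have s12 : (α₁ - α₂)^2 > 0 := pow_two_pos_of_ne_zero (sub_ne_zero_of_ne h12)
  have s13 : (α₁ - α₃)^2 > 0 := pow_two_pos_of_ne_zero (sub_ne_zero_of_ne h13)
  have s23 : (α₂ - α₃)^2 > 0 := pow_two_pos_of_ne_zero (sub_ne_zero_of_ne h23)
  nlinarith [mul_pos (neg_pos.2 h1) s23, mul_pos (neg_pos.2 h2) s13,
    mul_pos (neg_pos.2 h3) s12]
end

section
/- Let α₁, α₂, α₃ be real numbers with α₁ < 0 < α₂ ≤ α₃ and α₁ + α₂ + α₃ < 0. Then 8α₁α₂α₃ - (α₁+α₂)(α₁+α₃)(α₂+α₃) < 0. -/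
theorem stmt6 (α₁ α₂ α₃ : ℝ) (h1 : α₁ < 0) (h2 : 0 < α₂) (h23 : α₂ ≤ α₃)
    (hsum : α₁ + α₂ + α₃ < 0) :
    8*(α₁*α₂*α₃) - (α₁+α₂)*(α₁+α₃)*(α₂+α₃) < 0 := by
  have h3 : 0 < α₃ := lt_of_lt_of_le h2 h23
  have ha : α₁ + α₂ < 0 := by linarith
  have hb : α₁ + α₃ < 0 := by linarith
  have hc : 0 < α₂ + α₃ := by linarith
  nlinarith [mul_pos (mul_pos (neg_pos.2 ha) (neg_pos.2 hb)) hc,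
    mul_pos (mul_pos (neg_pos.2 h1) h2) h3]
end

section
/- Let α₁, α₂, α₃ be real numbers with α₁ ≤ α₂ < 0 < α₃ and α₁ + α₂ + α₃ > 0. Then 8α₁α₂α₃ - (α₁+α₂)(α₁+α₃)(α₂+α₃) > 0. -/
theorem stmt7 (α₁ α₂ α₃ : ℝ) (h12 : α₁ ≤ α₂) (h2 : α₂ < 0) (h3 : 0 < α₃)
    (hsum : 0 < α₁ + α₂ + α₃) :
    0 < 8*(α₁*α₂*α₃) - (α₁+α₂)*(α₁+α₃)*(α₂+α₃) := by
  nlinarith [mul_pos (neg_pos.2 (lt_of_le_of_lt h12 h2)) (neg_pos.2 h2), sq_nonneg (α₁ - α₂), sq_nonneg (α₁ + α₂ + α₃), mul_pos h3 hsum, sq_nonneg (α₁ + α₂), mul_pos (mul_pos (neg_pos.2 (lt_of_le_of_lt h12 h2)) (neg_pos.2 h2)) h3, mul_pos (mul_pos (neg_pos.2 h2) h3) hsum, mul_pos (mul_pos (neg_pos.2 (lt_of_le_of_lt h12 h2)) h3) hsum]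
end

section
/- Let α ∈ ℂ be a non-real complex number and r ∈ ℝ with r < 0. If α + conj(α) + r > 0, then 8·|α|²·r - (α + conj(α))·|α + r|² < 0. Equivalently, for the real monic cubic f with roots α, conj(α), r, the invariant L = ab - 9c is negative. -/
theorem stmt9_general (α : ℂ) (r : ℝ) (hr : r < 0)
    (hsum : 0 < 2*α.re + r) :
    8*‖α‖^2*r - (2*α.re)*‖α + (r:ℂ)‖^2 < 0 := by
  have hre : 0 < α.re := by linarith
  have hα : 0 < ‖α‖ := norm_pos_iff.mpr fun h => by simp [h] at hre
  have hneg : 8*‖α‖^2*r < 0 := mul_neg_of_pos_of_neg (by positivity) hr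
  have hnonneg : 0 ≤ (2*α.re)*‖α + (r:ℂ)‖^2 := by positivity
  linarith

theorem stmt9 (α : ℂ) (hα : α.im ≠ 0) (r : ℝ) (hr : r < 0)
    (hsum : 0 < 2*α.re + r) :
    8*‖α‖^2*r - (2*α.re)*‖α + (r:ℂ)‖^2 < 0 :=
  stmt9_general α r hr hsum
end

section
/- Let F be a field of characteristic different from 2 and 3, and let f(x) = x³ + ax² + bx + c ∈ F[x]. Assume: (1) if a² = 3b then ab ≠ 9c; and (2) if b·(a² - 4b) = 0 then c ≠ 0. Then the quartic polynomial x·f(x) ∈ F[x] has no root of multiplicity ≥ 3, and it does not have two distinct roots each of multiplicity 2. Equivalently, x·f(x) has at least three distinct roots in an algebraic closure of F. -/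
open Polynomial

lemma aux14 {K : Type*} [Field K] (A B C r s t : K)
    (h1 : A^2 = 3*B → A*B ≠ 9*C) (h2 : B*(A^2 - 4*B) = 0 → C ≠ 0)
    (hA : A = -(r+s+t)) (hB : B = r*s+r*t+s*t) (hC : C = -(r*s*t)) (heq : r = s) :
    (0:K) ≠ r ∧ (0:K) ≠ t ∧ r ≠ t := by
  subst heq
  refine ⟨?_, ?_, ?_⟩
  · intro h
    exact h2 (by rw [hB, hA, ← h]; ring) (by rw [hC, ← h]; ring)
  · intro h
    exact h2 (by rw [hB, hA, ← h]; ring) (by rw [hC, ← h]; ring)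
  · intro h
    subst h
    exact h1 (by rw [hA, hB]; ring) (by rw [hA, hB, hC]; ring)

open Polynomial in
theorem stmt14 {F : Type*} [Field F] (hchar2 : (2 : F) ≠ 0) (hchar3 : (3 : F) ≠ 0)
    (a b c : F) (h1 : a^2 = 3*b → a*b ≠ 9*c) (h2 : b*(a^2 - 4*b) = 0 → c ≠ 0) :
    ∃ x y z : AlgebraicClosure F, x ≠ y ∧ x ≠ z ∧ y ≠ z ∧
      x*(x^3 + algebraMap F (AlgebraicClosure F) a * x^2
        + algebraMap F (AlgebraicClosure F) b * x + algebraMap F (AlgebraicClosure F) c) = 0 ∧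
      y*(y^3 + algebraMap F (AlgebraicClosure F) a * y^2
        + algebraMap F (AlgebraicClosure F) b * y + algebraMap F (AlgebraicClosure F) c) = 0 ∧
      z*(z^3 + algebraMap F (AlgebraicClosure F) a * z^2
        + algebraMap F (AlgebraicClosure F) b * z + algebraMap F (AlgebraicClosure F) c) = 0 := by
  set K := AlgebraicClosure F
  set A : K := algebraMap F K a with hAdef
  set B : K := algebraMap F K b with hBdef
  set C : K := algebraMap F K c with hCdef
  have inj := (algebraMap F K).injective
  have h1' : A^2 = 3*B → A*B ≠ 9*C := by
    intro hh hab
    refine h1 (inj ?_) (inj ?_)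
    · rw [map_pow, map_mul, map_ofNat]; exact hh
    · rw [map_mul, map_mul, map_ofNat]; exact hab
  have h2' : B*(A^2 - 4*B) = 0 → C ≠ 0 := by
    intro hh hc
    refine h2 (inj ?_) (inj ?_)
    · rw [map_mul, map_sub, map_pow, map_mul, map_ofNat, map_zero]; exact hh
    · rw [map_zero]; exact hc
  -- find a root r of the cubic
  obtain ⟨r, hr⟩ := IsAlgClosed.exists_root (k := K)
      (X^3 + Polynomial.C A * X^2 + Polynomial.C B * X + Polynomial.C C)
      (by rw [show (X^3 + Polynomial.C A * X^2 + Polynomial.C B * X + Polynomial.C C : K[X]).degree = 3 by compute_degree!]; norm_num)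
  have hr' : r^3 + A*r^2 + B*r + C = 0 := by
    simpa only [IsRoot, eval_add, eval_mul, eval_pow, eval_X, eval_C] using hr
  -- find a root s of the quadratic cofactor
  obtain ⟨s, hs⟩ := IsAlgClosed.exists_root (k := K)
      (X^2 + Polynomial.C (A + r) * X + Polynomial.C (B + A*r + r^2))
      (by rw [show (X^2 + Polynomial.C (A + r) * X + Polynomial.C (B + A*r + r^2) : K[X]).degree = 2 by compute_degree!]; norm_num)
  have hs' : s^2 + (A + r)*s + (B + A*r + r^2) = 0 := by
    simpa only [IsRoot, eval_add, eval_mul, eval_pow, eval_X, eval_C] using hs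
  set t : K := -(A + r + s) with ht
  have hA' : A = -(r + s + t) := by rw [ht]; ring
  have hB' : B = r*s + r*t + s*t := by rw [ht]; linear_combination hs'
  have hC' : C = -(r*s*t) := by rw [ht]; linear_combination hr' - r*hs'
  have hfact : ∀ x : K, x^3 + A*x^2 + B*x + C = (x - r)*(x - s)*(x - t) := by
    intro x
    linear_combination x^2*hA' + x*hB' + hC'
  have rootr : ∀ x : K, (x = r ∨ x = s ∨ x = t) →
      x*(x^3 + A*x^2 + B*x + C) = 0 := by
    intro x hx
    rw [hfact x]
    rcases hx with h | h | h <;> subst h <;> ring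
  by_cases hrs : r = s
  · obtain ⟨e1, e2, e3⟩ := aux14 A B C r s t h1' h2' hA' hB' hC' hrs
    exact ⟨0, r, t, e1, e2, e3, by ring, rootr r (Or.inl rfl), rootr t (Or.inr (Or.inr rfl))⟩
  by_cases hrt : r = t
  · obtain ⟨e1, e2, e3⟩ := aux14 A B C r t s h1' h2'
      (by rw [hA']; ring) (by rw [hB']; ring) (by rw [hC']; ring) hrt
    exact ⟨0, r, s, e1, e2, e3, by ring, rootr r (Or.inl rfl), rootr s (Or.inr (Or.inl rfl))⟩
  by_cases hst : s = t
  · obtain ⟨e1, e2, e3⟩ := aux14 A B C s t r h1' h2'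
      (by rw [hA']; ring) (by rw [hB']; ring) (by rw [hC']; ring) hst
    exact ⟨0, s, r, e1, e2, e3, by ring, rootr s (Or.inr (Or.inl rfl)), rootr r (Or.inl rfl)⟩
  · exact ⟨r, s, t, hrs, hrt, hst, rootr r (Or.inl rfl), rootr s (Or.inr (Or.inl rfl)),
      rootr t (Or.inr (Or.inr rfl))⟩
end

section
/- Let K be a field, and let g₁, g₂ ∈ K[x] be monic cubics with roots α₁, α₂, α₃ and β₁, β₂, β₃ respectively (in an algebraic closure). Define A = α₁α₂(β₁-β₂) + α₃α₁(β₃-β₁) + α₂α₃(β₂-β₃), B = α₁α₂β₃(β₂-β₁) + α₃α₁β₂(β₁-β₃) + α₂α₃β₁(β₃-β₂), C = β₁(α₂-α₃) + β₂(α₃-α₁) + β₃(α₁-α₂), D = β₁β₂(α₁-α₂) + β₂β₃(α₂-α₃) + β₃β₁(α₃-α₁). Assume A - Cαᵢ ≠ 0 for i = 1, 2, 3 and AD - BC ≠ 0. Then for all x with A - Cx ≠ 0, g₂((Dx - B)/(A - Cx)) = (AD - BC)³ / ((A - Cx)³ · (A - Cα₁)(A - Cα₂)(A - Cα₃)) ·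 g₁(x). -/
/-! The interpolation formulas make `h z = (D z - B)/(A - C z)` the Möbius map with `h αᵢ = βᵢ`.
Since `h x - h a = (AD - BC)(x - a)/((A - C x)(A - C a))`, substituting `βᵢ = h αᵢ` turns each factor
`h x - βᵢ` of `g₂(h x)` into a multiple of the factor `x - αᵢ` of `g₁ x`. -/

section Mobius

variable {K : Type*} [Field K] {A B C D : K}

theorem mobius_sub_mobius {x a : K} (hx : A - C * x ≠ 0) (ha : A - C * a ≠ 0) :
    (D * x - B) / (A - C * x) - (D * a - B) / (A - C * a)
      = (A * D - B * C) * (x - a) / ((A - C * x) * (A - C * a)) := by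
  rw [div_sub_div _ _ hx ha]
  ring

theorem mobius_interpolates {α₁ α₂ α₃ β₁ β₂ β₃ : K}
    (hA : A = α₁*α₂*(β₁-β₂) + α₃*α₁*(β₃-β₁) + α₂*α₃*(β₂-β₃))
    (hB : B = α₁*α₂*β₃*(β₂-β₁) + α₃*α₁*β₂*(β₁-β₃) + α₂*α₃*β₁*(β₃-β₂))
    (hC : C = β₁*(α₂-α₃) + β₂*(α₃-α₁) + β₃*(α₁-α₂))
    (hD : D = β₁*β₂*(α₁-α₂) + β₂*β₃*(α₂-α₃) + β₃*β₁*(α₃-α₁)) :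
    β₁ * (A - C * α₁) = D * α₁ - B ∧ β₂ * (A - C * α₂) = D * α₂ - B ∧
      β₃ * (A - C * α₃) = D * α₃ - B := by
  subst hA hB hC hD
  exact ⟨by ring, by ring, by ring⟩

end Mobius

theorem stmt16_general {K : Type*} [Field K] (α₁ α₂ α₃ β₁ β₂ β₃ : K)
    (A B C D : K)
    (hA : A = α₁*α₂*(β₁-β₂) + α₃*α₁*(β₃-β₁) + α₂*α₃*(β₂-β₃))
    (hB : B = α₁*α₂*β₃*(β₂-β₁) + α₃*α₁*β₂*(β₁-β₃) + α₂*α₃*β₁*(β₃-β₂))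
    (hC : C = β₁*(α₂-α₃) + β₂*(α₃-α₁) + β₃*(α₁-α₂))
    (hD : D = β₁*β₂*(α₁-α₂) + β₂*β₃*(α₂-α₃) + β₃*β₁*(α₃-α₁))
    (hα1 : A - C*α₁ ≠ 0) (hα2 : A - C*α₂ ≠ 0) (hα3 : A - C*α₃ ≠ 0)
    (x : K) (hx : A - C*x ≠ 0) :
    ((D*x - B)/(A - C*x) - β₁) * ((D*x - B)/(A - C*x) - β₂) * ((D*x - B)/(A - C*x) - β₃)
      = (A*D - B*C)^3 / ((A - C*x)^3 * ((A - C*α₁)*(A - C*α₂)*(A - C*α₃)))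
        * ((x - α₁)*(x - α₂)*(x - α₃)) := by
  obtain ⟨h₁, h₂, h₃⟩ := mobius_interpolates hA hB hC hD
  rw [(eq_div_iff hα1).2 h₁, (eq_div_iff hα2).2 h₂, (eq_div_iff hα3).2 h₃,
    mobius_sub_mobius hx hα1, mobius_sub_mobius hx hα2, mobius_sub_mobius hx hα3,
    div_mul_div_comm, div_mul_div_comm, div_mul_eq_mul_div]
  congr 1 <;> ring

theorem stmt16 {K : Type*} [Field K] (α₁ α₂ α₃ β₁ β₂ β₃ : K)
    (A B C D : K)
    (hA : A = α₁*α₂*(β₁-β₂) + α₃*α₁*(β₃-β₁) + α₂*α₃*(β₂-β₃))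
    (hB : B = α₁*α₂*β₃*(β₂-β₁) + α₃*α₁*β₂*(β₁-β₃) + α₂*α₃*β₁*(β₃-β₂))
    (hC : C = β₁*(α₂-α₃) + β₂*(α₃-α₁) + β₃*(α₁-α₂))
    (hD : D = β₁*β₂*(α₁-α₂) + β₂*β₃*(α₂-α₃) + β₃*β₁*(α₃-α₁))
    (hα1 : A - C*α₁ ≠ 0) (hα2 : A - C*α₂ ≠ 0) (hα3 : A - C*α₃ ≠ 0)
    (hdet : A*D - B*C ≠ 0) (x : K) (hx : A - C*x ≠ 0) :
    ((D*x - B)/(A - C*x) - β₁) * ((D*x - B)/(A - C*x) - β₂) * ((D*x - B)/(A - C*x) - β₃)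
      = (A*D - B*C)^3 / ((A - C*x)^3 * ((A - C*α₁)*(A - C*α₂)*(A - C*α₃)))
        * ((x - α₁)*(x - α₂)*(x - α₃)) :=
  stmt16_general α₁ α₂ α₃ β₁ β₂ β₃ A B C D hA hB hC hD hα1 hα2 hα3 x hx
end
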